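/- arXiv:1603.03350 — 3 statements merged into one kernel-verified Lean document; each statement's English description precedes it below -/
import Mathlib

section
/- Let N ≥ 3, 1 < p < ∞ and 0 ≤ α ≤ (N-2)(p-1). Then for all nonnegative real numbers I_0, I_α, J_0, J_α satisfying γ_0 J_0^2 ≤ I_0^2 and γ_α J_α^2 ≤ I_α^2 (where γ_α = ((N+α-2)/p)^2), and any real c ≤ (p-1)γ_0, one has -(p-1)I_0^2 - (p-1)I_α^2 + c J_0^2 + α I_α J_α ≤ 0. -/
/-!
With `γ₀ = ((N-2)/p)²` and `k = (N+α-2)/p`, the Hardy-type hypotheses give `c J₀² ≤ (p-1) I₀²`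
and `|k Jα| ≤ |Iα|`. The restriction `α ≤ (N-2)(p-1)` is exactly `α ≤ (p-1) k`, so the cross term
satisfies `α Iα Jα ≤ (p-1) k |Iα| |Jα| ≤ (p-1) Iα²`; the two estimates absorb the positive terms.
-/

lemma mul_sq_le_of_le_mul_of_mul_sq_le {m γ c I J : ℝ} (hm : 0 ≤ m) (hc : c ≤ m * γ)
    (hγ : γ * J ^ 2 ≤ I ^ 2) : c * J ^ 2 ≤ m * I ^ 2 :=
  calc c * J ^ 2 ≤ m * γ * J ^ 2 := mul_le_mul_of_nonneg_right hc (sq_nonneg J)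
    _ = m * (γ * J ^ 2) := mul_assoc _ _ _
    _ ≤ m * I ^ 2 := mul_le_mul_of_nonneg_left hγ hm

lemma mul_mul_le_mul_sq_of_sq_mul_sq_le {m α k I J : ℝ} (hm : 0 ≤ m) (hα0 : 0 ≤ α)
    (hα : α ≤ m * k) (hk : k ^ 2 * J ^ 2 ≤ I ^ 2) : α * I * J ≤ m * I ^ 2 := by
  have hkJ : |k * J| ≤ |I| := sq_le_sq.mp (by rwa [mul_pow])
  have hαk : α ≤ m * |k| := hα.trans (mul_le_mul_of_nonneg_left (le_abs_self k) hm)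
  calc α * I * J ≤ |α * I * J| := le_abs_self _
    _ = α * (|I| * |J|) := by rw [abs_mul, abs_mul, abs_of_nonneg hα0, mul_assoc]
    _ ≤ m * |k| * (|I| * |J|) := by gcongr
    _ = m * |k * J| * |I| := by rw [abs_mul]; ring
    _ ≤ m * |I| * |I| := by gcongr
    _ = m * I ^ 2 := by rw [mul_assoc, abs_mul_abs_self, sq]

lemma le_sub_one_mul_div_of_le_mul_sub_one {n p α : ℝ} (hp : 0 < p) (hα : α ≤ n * (p - 1)) :
    α ≤ (p - 1) * ((n + α) / p) := by
  rw [← mul_div_assoc, le_div_iff₀ hp]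
  linarith

theorem dissipativity_algebra_general (N : ℕ) (p α c : ℝ) (hp : 1 < p)
    (hα0 : 0 ≤ α) (hα : α ≤ ((N : ℝ) - 2) * (p - 1))
    (I0 Iα J0 Jα : ℝ)
    (h0 : (((N : ℝ) - 2) / p) ^ 2 * J0 ^ 2 ≤ I0 ^ 2)
    (hα2 : (((N : ℝ) + α - 2) / p) ^ 2 * Jα ^ 2 ≤ Iα ^ 2)
    (hc : c ≤ (p - 1) * (((N : ℝ) - 2) / p) ^ 2) :
    -(p - 1) * I0 ^ 2 - (p - 1) * Iα ^ 2 + c * J0 ^ 2 + α * Iα * Jα ≤ 0 := by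
  have hp1 : 0 ≤ p - 1 := by linarith
  have hαk : α ≤ (p - 1) * (((N : ℝ) + α - 2) / p) := by
    have := le_sub_one_mul_div_of_le_mul_sub_one (by linarith) hα
    rwa [sub_add_eq_add_sub] at this
  have hHardy0 := mul_sq_le_of_le_mul_of_mul_sq_le hp1 hc h0
  have hCross := mul_mul_le_mul_sq_of_sq_mul_sq_le hp1 hα0 hαk hα2
  linarith

theorem dissipativity_algebra (N : ℕ) (hN : 3 ≤ N) (p α c : ℝ) (hp : 1 < p)
    (hα0 : 0 ≤ α) (hα : α ≤ ((N : ℝ) - 2) * (p - 1))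
    (I0 Iα J0 Jα : ℝ) (hI0 : 0 ≤ I0) (hIα : 0 ≤ Iα) (hJ0 : 0 ≤ J0) (hJα : 0 ≤ Jα)
    (h0 : (((N : ℝ) - 2) / p) ^ 2 * J0 ^ 2 ≤ I0 ^ 2)
    (hα2 : (((N : ℝ) + α - 2) / p) ^ 2 * Jα ^ 2 ≤ Iα ^ 2)
    (hc : c ≤ (p - 1) * (((N : ℝ) - 2) / p) ^ 2) :
    -(p - 1) * I0 ^ 2 - (p - 1) * Iα ^ 2 + c * J0 ^ 2 + α * Iα * Jα ≤ 0 :=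
  dissipativity_algebra_general N p α c hp hα0 hα I0 Iα J0 Jα h0 hα2 hc
end

section
/- Let N ≥ 3, 1 < p < ∞, α ≥ 0, c ≤ (p-1)((N-2)/p)^2, and η < 0 satisfying η + (N+α-2)^2/(p p') - α(N+α-2)/p ≥ 0 where p' = p/(p-1). Then for all nonnegative reals I_0, I_α, J_0, J_α with γ_0 J_0^2 ≤ I_0^2 and γ_α J_α^2 ≤ I_α^2 (γ_α = ((N+α-2)/p)^2), one has -(p-1)I_0^2 - (p-1)I_α^2 + c J_0^2 + α I_α J_α - η J_α^2 ≤ 0. -/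
/-!
With `β = (N + α - 2) / p` one has `(N + α - 2)² / (p p') = (p - 1) β²`, so the hypothesis on `η`
reads `-η ≤ (p - 1) β² - α β`. The `J₀`-terms are absorbed directly by the Hardy relation
`γ₀ J₀² ≤ I₀²`. In the `α`-terms, this bound on `-η` leaves the quadratic form
`-(I - β J) ((p - 1) I + ((p - 1) β - α) J)` in `I = I_α`, `J = J_α`, which is nonpositive because
the Hardy relation gives `I ≥ β J`, and `η < 0` forces `(p - 1) β ≥ α`.
-/

lemma mul_sq_le_mul_sq_of_le_mul {q c γ I J : ℝ} (hq : 0 ≤ q) (hc : c ≤ q * γ)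
    (hIJ : γ * J ^ 2 ≤ I ^ 2) : c * J ^ 2 ≤ q * I ^ 2 :=
  calc c * J ^ 2 ≤ q * γ * J ^ 2 := mul_le_mul_of_nonneg_right hc (sq_nonneg J)
    _ = q * (γ * J ^ 2) := mul_assoc q γ _
    _ ≤ q * I ^ 2 := mul_le_mul_of_nonneg_left hIJ hq

lemma neg_mul_sq_add_mul_mul_sub_mul_sq_nonpos {q β α η I J : ℝ} (hq : 0 ≤ q) (hβ : 0 < β)
    (hI : 0 ≤ I) (hJ : 0 ≤ J) (hη : η ≤ 0) (hcond : 0 ≤ η + q * β ^ 2 - α * β)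
    (hIJ : β ^ 2 * J ^ 2 ≤ I ^ 2) :
    -q * I ^ 2 + α * I * J - η * J ^ 2 ≤ 0 := by
  have hβJ : β * J ≤ I :=
    (sq_le_sq₀ (mul_nonneg hβ.le hJ) hI).mp (by rwa [mul_pow])
  have hαβ : α ≤ q * β := by
    have : 0 ≤ β * (q * β - α) := by linear_combination hcond + hη
    exact sub_nonneg.mp ((mul_nonneg_iff_of_pos_left hβ).mp this)
  have hηJ : -η * J ^ 2 ≤ (q * β ^ 2 - α * β) * J ^ 2 :=
    mul_le_mul_of_nonneg_right (by linarith) (sq_nonneg J)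
  calc -q * I ^ 2 + α * I * J - η * J ^ 2
      ≤ -q * I ^ 2 + α * I * J + (q * β ^ 2 - α * β) * J ^ 2 := by linarith
    _ = -((I - β * J) * (q * I + (q * β - α) * J)) := by ring
    _ ≤ 0 := neg_nonpos.mpr <| mul_nonneg (sub_nonneg.mpr hβJ) <|
        add_nonneg (mul_nonneg hq hI) (mul_nonneg (sub_nonneg.mpr hαβ) hJ)

theorem dissipativity_algebra_eta_general (N : ℕ) (hN : 3 ≤ N) (p α c η : ℝ) (hp : 1 < p)
    (hα : 0 ≤ α) (hc : c ≤ (p - 1) * (((N : ℝ) - 2) / p) ^ 2) (hη : η < 0)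
    (hηcond : η + ((N : ℝ) + α - 2) ^ 2 / (p * (p / (p - 1))) - α * ((N : ℝ) + α - 2) / p ≥ 0)
    (I0 Iα J0 Jα : ℝ) (hIα : 0 ≤ Iα) (hJα : 0 ≤ Jα)
    (h0 : (((N : ℝ) - 2) / p) ^ 2 * J0 ^ 2 ≤ I0 ^ 2)
    (hα2 : (((N : ℝ) + α - 2) / p) ^ 2 * Jα ^ 2 ≤ Iα ^ 2) :
    -(p - 1) * I0 ^ 2 - (p - 1) * Iα ^ 2 + c * J0 ^ 2 + α * Iα * Jα - η * Jα ^ 2 ≤ 0 := by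
  have hq : 0 < p - 1 := sub_pos.mpr hp
  have hβ : 0 < ((N : ℝ) + α - 2) / p := by
    have : (3 : ℝ) ≤ N := by exact_mod_cast hN
    exact div_pos (by linarith) (by linarith)
  have hpp' : ((N : ℝ) + α - 2) ^ 2 / (p * (p / (p - 1)))
      = (p - 1) * (((N : ℝ) + α - 2) / p) ^ 2 := by
    field_simp
  have hcond : 0 ≤ η + (p - 1) * (((N : ℝ) + α - 2) / p) ^ 2 - α * (((N : ℝ) + α - 2) / p) := by
    rwa [hpp', mul_div_assoc] at hηcond
  have h0' := mul_sq_le_mul_sq_of_le_mul hq.le hc h0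
  have hα' := neg_mul_sq_add_mul_mul_sub_mul_sq_nonpos hq.le hβ hIα hJα hη.le hcond hα2
  linarith

theorem dissipativity_algebra_eta (N : ℕ) (hN : 3 ≤ N) (p α c η : ℝ) (hp : 1 < p)
    (hα : 0 ≤ α) (hc : c ≤ (p - 1) * (((N : ℝ) - 2) / p) ^ 2) (hη : η < 0)
    (hηcond : η + ((N : ℝ) + α - 2) ^ 2 / (p * (p / (p - 1))) - α * ((N : ℝ) + α - 2) / p ≥ 0)
    (I0 Iα J0 Jα : ℝ) (hI0 : 0 ≤ I0) (hIα : 0 ≤ Iα) (hJ0 : 0 ≤ J0) (hJα : 0 ≤ Jα)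
    (h0 : (((N : ℝ) - 2) / p) ^ 2 * J0 ^ 2 ≤ I0 ^ 2)
    (hα2 : (((N : ℝ) + α - 2) / p) ^ 2 * Jα ^ 2 ≤ Iα ^ 2) :
    -(p - 1) * I0 ^ 2 - (p - 1) * Iα ^ 2 + c * J0 ^ 2 + α * Iα * Jα - η * Jα ^ 2 ≤ 0 :=
  dissipativity_algebra_eta_general N hN p α c η hp hα hc hη hηcond I0 Iα J0 Jα hIα hJα h0 hα2
end

section
/- Let N ≥ 3, p > 1, and let v(r) = r^β e^{-r/p} with β > (2p-N)/p and δ := βp + N - 2p > 0. Then ∫_0^∞ (v''(r) + ((N-1)/r)v'(r)) r^{-2(p-1)} v(r)^{p-1} r^{N-1} dr = (β(β+N-2) + ((1-N-2β)/p)δ + δ(δ+1)/p^2)·Γ(δ), where Γ is the Euler Gamma function. -/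
/-!
The first and second derivatives of `x ^ γ * exp (-x / p)` are again combinations of functions
of the same shape, so the radial Laplacian of `v = r ^ β * exp (-r / p)` is
`r ^ (β - 2) * exp (-r / p)` times a quadratic polynomial in `r`. Multiplying by the weights,
the powers of `r` collect to `r ^ (δ - 1)` and the exponentials to `exp (-r)`, so the integral is
a combination of `Γ(δ)`, `Γ(δ + 1) = δ Γ(δ)` and `Γ(δ + 2) = δ (δ + 1) Γ(δ)`.
-/

open MeasureTheory Real Set Filter Topology

noncomputable def radialLaplacian (N : ℝ) (v : ℝ → ℝ) (r : ℝ) : ℝ :=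
  deriv (deriv v) r + ((N - 1) / r) * deriv v r

lemma exp_neg_mul_rpow_mul_pow_eqOn (s : ℝ) (n : ℕ) :
    EqOn (fun x => exp (-x) * x ^ (s + n - 1)) (fun x => exp (-x) * x ^ (s - 1) * x ^ n)
      (Ioi 0) := by
  intro x (hx : 0 < x)
  dsimp only
  rw [mul_assoc, ← rpow_natCast, ← rpow_add hx]
  ring_nf

lemma integrableOn_exp_neg_mul_rpow_mul_pow {s : ℝ} (hs : 0 < s) (n : ℕ) :
    IntegrableOn (fun x => exp (-x) * x ^ (s - 1) * x ^ n) (Ioi 0) :=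
  (GammaIntegral_convergent (by positivity)).congr_fun (exp_neg_mul_rpow_mul_pow_eqOn s n)
    measurableSet_Ioi

lemma integral_Ioi_exp_neg_mul_rpow_mul_pow {s : ℝ} (hs : 0 < s) (n : ℕ) :
    ∫ x in Ioi 0, exp (-x) * x ^ (s - 1) * x ^ n = Gamma (s + n) := by
  rw [← setIntegral_congr_fun measurableSet_Ioi (exp_neg_mul_rpow_mul_pow_eqOn s n),
    Gamma_eq_integral (by positivity)]

lemma integral_Ioi_exp_neg_mul_rpow_mul_quadratic {s : ℝ} (hs : 0 < s) (a b c : ℝ) :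
    ∫ x in Ioi 0, exp (-x) * x ^ (s - 1) * (a + b * x + c * x ^ 2)
      = (a + b * s + c * (s * (s + 1))) * Gamma s := by
  have I₀ := integrableOn_exp_neg_mul_rpow_mul_pow hs 0
  have I₁ := integrableOn_exp_neg_mul_rpow_mul_pow hs 1
  have I₂ := integrableOn_exp_neg_mul_rpow_mul_pow hs 2
  have hsplit : (fun x => exp (-x) * x ^ (s - 1) * (a + b * x + c * x ^ 2))
      = fun x => a * (exp (-x) * x ^ (s - 1) * x ^ 0) + b * (exp (-x) * x ^ (s - 1) * x ^ 1)
          + c * (exp (-x) * x ^ (s - 1) * x ^ 2) := by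
    ext x; ring
  have hΓ₂ : Gamma (s + 2) = s * (s + 1) * Gamma s := by
    rw [show s + 2 = (s + 1) + 1 by ring, Gamma_add_one (by positivity), Gamma_add_one hs.ne']
    ring
  have I₀₁ : IntegrableOn
      (fun x => a * (exp (-x) * x ^ (s - 1) * x ^ 0) + b * (exp (-x) * x ^ (s - 1) * x ^ 1))
      (Ioi 0) := (I₀.const_mul a).add (I₁.const_mul b)
  rw [hsplit, integral_add I₀₁ (I₂.const_mul c),
    integral_add (I₀.const_mul a) (I₁.const_mul b), integral_const_mul, integral_const_mul,
    integral_const_mul, integral_Ioi_exp_neg_mul_rpow_mul_pow hs,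
    integral_Ioi_exp_neg_mul_rpow_mul_pow hs, integral_Ioi_exp_neg_mul_rpow_mul_pow hs]
  push_cast
  rw [add_zero, Gamma_add_one hs.ne', hΓ₂]
  ring

section RadialLaplacian

variable {p : ℝ}

lemma hasDerivAt_rpow_mul_exp_neg_div (γ : ℝ) {x : ℝ} (hx : 0 < x) :
    HasDerivAt (fun x => x ^ γ * exp (-x / p))
      (γ * (x ^ (γ - 1) * exp (-x / p)) - x ^ γ * exp (-x / p) / p) x := by
  have hexp : HasDerivAt (fun x => exp (-x / p)) (exp (-x / p) * (-1 / p)) x :=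
    (hasDerivAt_exp _).comp x ((hasDerivAt_neg x).div_const p)
  exact ((hasDerivAt_rpow_const (Or.inl hx.ne')).mul hexp).congr_deriv (by ring)

lemma deriv_deriv_rpow_mul_exp_neg_div (γ : ℝ) {x : ℝ} (hx : 0 < x) :
    deriv (deriv fun x => x ^ γ * exp (-x / p)) x
      = γ * ((γ - 1) * (x ^ (γ - 2) * exp (-x / p)) - x ^ (γ - 1) * exp (-x / p) / p)
        - (γ * (x ^ (γ - 1) * exp (-x / p)) - x ^ γ * exp (-x / p) / p) / p := by
  have hderiv : deriv (fun x => x ^ γ * exp (-x / p)) =ᶠ[𝓝 x]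
      fun x => γ * (x ^ (γ - 1) * exp (-x / p)) - x ^ γ * exp (-x / p) / p := by
    filter_upwards [Ioi_mem_nhds hx] with y hy
    exact (hasDerivAt_rpow_mul_exp_neg_div γ hy).deriv
  rw [hderiv.deriv_eq]
  have h := ((hasDerivAt_rpow_mul_exp_neg_div (p := p) (γ - 1) hx).const_mul γ).sub
    ((hasDerivAt_rpow_mul_exp_neg_div (p := p) γ hx).div_const p)
  rw [show γ - 1 - 1 = γ - 2 by ring] at h
  exact h.deriv

lemma radialLaplacian_rpow_mul_exp_neg_div (N β : ℝ) {r : ℝ} (hr : 0 < r) :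
    radialLaplacian N (fun r => r ^ β * exp (-r / p)) r
      = r ^ (β - 2) * exp (-r / p)
        * (β * (β + N - 2) + (1 - N - 2 * β) / p * r + 1 / p ^ 2 * r ^ 2) := by
  have h₁ : r ^ (β - 1) = r ^ (β - 2) * r := by
    rw [← rpow_add_one hr.ne']; ring_nf
  have h₂ : r ^ β = r ^ (β - 2) * r ^ 2 := by
    rw [← rpow_natCast, ← rpow_add hr]; norm_num
  rw [radialLaplacian, deriv_deriv_rpow_mul_exp_neg_div β hr,
    (hasDerivAt_rpow_mul_exp_neg_div β hr).deriv, h₁, h₂]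
  field_simp
  ring

lemma radialLaplacian_mul_weights_eq (hp : p ≠ 0) (N β : ℝ) {r : ℝ} (hr : 0 < r) :
    radialLaplacian N (fun r => r ^ β * exp (-r / p)) r
        * r ^ (-2 * (p - 1)) * (r ^ β * exp (-r / p)) ^ (p - 1) * r ^ (N - 1)
      = exp (-r) * r ^ (β * p + N - 2 * p - 1)
        * (β * (β + N - 2) + (1 - N - 2 * β) / p * r + 1 / p ^ 2 * r ^ 2) := by
  have hpow : r ^ (β * p + N - 2 * p - 1)
      = r ^ (β - 2) * r ^ (-2 * (p - 1)) * r ^ (β * (p - 1)) * r ^ (N - 1) := by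
    rw [← rpow_add hr, ← rpow_add hr, ← rpow_add hr]
    ring_nf
  have hexp : exp (-r) = exp (-r / p) * exp (-r / p * (p - 1)) := by
    rw [← exp_add]
    congr 1
    field_simp
    ring
  rw [radialLaplacian_rpow_mul_exp_neg_div N β hr, mul_rpow (rpow_nonneg hr.le β) (exp_pos _).le,
    ← rpow_mul hr.le, ← exp_mul, hpow, hexp]
  ring

end RadialLaplacian

theorem radial_integral_gamma_general (N : ℕ) (p β δ : ℝ) (hp : 1 < p)
    (hδ : δ = β * p + (N : ℝ) - 2 * p) (hδpos : 0 < δ)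
    (v : ℝ → ℝ) (hv : v = fun r => r ^ β * Real.exp (-r / p)) :
    ∫ r in Set.Ioi (0 : ℝ),
        (deriv (deriv v) r + (((N : ℝ) - 1) / r) * deriv v r)
          * r ^ (-2 * (p - 1)) * (v r) ^ (p - 1) * r ^ ((N : ℝ) - 1)
      = (β * (β + (N : ℝ) - 2) + ((1 - (N : ℝ) - 2 * β) / p) * δ + δ * (δ + 1) / p ^ 2)
          * Real.Gamma δ := by
  subst hv
  calc _ = ∫ r in Ioi 0, exp (-r) * r ^ (δ - 1)
          * (β * (β + N - 2) + (1 - N - 2 * β) / p * r + 1 / p ^ 2 * r ^ 2) := by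
        refine setIntegral_congr_fun measurableSet_Ioi fun r hr => ?_
        rw [hδ]
        exact radialLaplacian_mul_weights_eq (zero_lt_one.trans hp).ne' (N : ℝ) β hr
    _ = _ := by
        rw [integral_Ioi_exp_neg_mul_rpow_mul_quadratic hδpos]
        ring

theorem radial_integral_gamma (N : ℕ) (hN : 3 ≤ N) (p β δ : ℝ) (hp : 1 < p)
    (hβ : (2 * p - (N : ℝ)) / p < β) (hδ : δ = β * p + (N : ℝ) - 2 * p) (hδpos : 0 < δ)
    (v : ℝ → ℝ) (hv : v = fun r => r ^ β * Real.exp (-r / p)) :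
    ∫ r in Set.Ioi (0 : ℝ),
        (deriv (deriv v) r + (((N : ℝ) - 1) / r) * deriv v r)
          * r ^ (-2 * (p - 1)) * (v r) ^ (p - 1) * r ^ ((N : ℝ) - 1)
      = (β * (β + (N : ℝ) - 2) + ((1 - (N : ℝ) - 2 * β) / p) * δ + δ * (δ + 1) / p ^ 2)
          * Real.Gamma δ :=
  radial_integral_gamma_general N p β δ hp hδ hδpos v hv
end
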